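/- Every triply odd signed eulerian graph G has flow number Φ(G) = 3. -/

import Mathlib

open Finset

/-- A signed multigraph on vertex type `V` with edge type `E`: each edge `e`
consists of two half-edges indexed by `Bool`; `ends e i` is the end-vertex at
which the half-edge `(e, i)` is attached (loops and multiple edges are
allowed), and `sign e ∈ {1, -1}` is the sign of the edge `e`. -/
structure SignedGraph (V E : Type) where
  ends : E → Bool → V
  sign : E → ℤˣ

namespace SignedGraph

variable {V E : Type} [Fintype V] [Fintype E] [DecidableEq V] [DecidableEq E]

/-- The valency of `v` in the subgraph spanned by the edge set `S`:
the number of half-edges of edges of `S` attached at `v` (a loop at `v`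
contributes `2`). -/
def valencyOn (G : SignedGraph V E) (S : Finset E) (v : V) : ℕ :=
  (univ.filter fun p : E × Bool => p.1 ∈ S ∧ G.ends p.1 p.2 = v).card

/-- The valency of a vertex in `G`. -/
def valency (G : SignedGraph V E) (v : V) : ℕ :=
  G.valencyOn univ v

/-- The set of vertices incident with some edge of `S`. -/
def suppV (G : SignedGraph V E) (S : Finset E) : Finset V :=
  univ.filter fun v => ∃ e ∈ S, ∃ i : Bool, G.ends e i = v

/-- `u` and `v` are joined by an edge of `S`. -/
def AdjOn (G : SignedGraph V E) (S : Finset E) (u v : V) : Prop :=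
  ∃ e ∈ S, ∃ i : Bool, G.ends e i = u ∧ G.ends e (!i) = v

/-- The subgraph spanned by the edge set `S` is connected: any two vertices
incident with edges of `S` are joined by a walk using edges of `S`. -/
def ConnOn (G : SignedGraph V E) (S : Finset E) : Prop :=
  ∀ u ∈ G.suppV S, ∀ v ∈ G.suppV S, Relation.ReflTransGen (G.AdjOn S) u v

/-- `G` is connected (as a graph on the whole vertex set `V`). -/
def Connected (G : SignedGraph V E) : Prop :=
  Nonempty V ∧ ∀ u v : V, Relation.ReflTransGen (G.AdjOn univ) u v

/-- The edge set `S` spans a circuit: a nonempty connected `2`-regular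
subgraph. -/
def IsCircuit (G : SignedGraph V E) (S : Finset E) : Prop :=
  S.Nonempty ∧ G.ConnOn S ∧ ∀ v ∈ G.suppV S, G.valencyOn S v = 2

/-- The sign of a set of edges: the product of the signs of its edges. -/
def signOf (G : SignedGraph V E) (S : Finset E) : ℤˣ :=
  ∏ e ∈ S, G.sign e

/-- The negative edges among `S`. -/
def negEdges (G : SignedGraph V E) (S : Finset E) : Finset E :=
  S.filter fun e => G.sign e = -1

/-- A balanced circuit: a circuit of sign `+1`. -/
def IsBalancedCircuit (G : SignedGraph V E) (S : Finset E) : Prop :=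
  G.IsCircuit S ∧ G.signOf S = 1

/-- An unbalanced circuit: a circuit of sign `-1`. -/
def IsUnbalancedCircuit (G : SignedGraph V E) (S : Finset E) : Prop :=
  G.IsCircuit S ∧ G.signOf S = -1

/-- `G` is balanced: it contains no unbalanced circuit. -/
def Balanced (G : SignedGraph V E) : Prop :=
  ∀ S : Finset E, G.IsCircuit S → G.signOf S = 1

/-- `G` is tightly unbalanced: it is unbalanced, but for some edge `f` the
graph `G - f` is balanced. -/
def TightlyUnbalanced (G : SignedGraph V E) : Prop :=
  ¬ G.Balanced ∧ ∃ f : E, ∀ S : Finset E, G.IsCircuit S → f ∉ S → G.signOf S = 1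

/-- `G` is eulerian: connected with all valencies even. -/
def Eulerian (G : SignedGraph V E) : Prop :=
  G.Connected ∧ ∀ v : V, Even (G.valency v)

/-- The edge set `S` spans an eulerian subgraph of `G`. -/
def EulerianOn (G : SignedGraph V E) (S : Finset E) : Prop :=
  S.Nonempty ∧ G.ConnOn S ∧ ∀ v : V, Even (G.valencyOn S v)

/-- An orientation (bidirection) of `G`: `dir e i = true` means that the
half-edge `(e, i)` is directed towards its end-vertex, `dir e i = false` that
it is directed away from it.  Compatibility: a positive edge becomes an
ordinary directed edge (one half-edge in, one out) and a negative edge becomes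
a broken (extroverted or introverted) edge. -/
structure Orientation (G : SignedGraph V E) where
  dir : E → Bool → Bool
  compat : ∀ e : E, G.sign e = 1 ↔ dir e false ≠ dir e true

/-- `φ` is a flow on `G` with respect to the orientation `O`: at every vertex
`v`, the sum of values on half-edges directed into `v` equals the sum of
values on half-edges directed out of `v` (Kirchhoff's law). -/
def IsFlow {A : Type} [AddCommGroup A] (G : SignedGraph V E)
    (O : G.Orientation) (φ : E → A) : Prop :=
  ∀ v : V,
    ∑ p ∈ univ.filter (fun p : E × Bool => G.ends p.1 p.2 = v),
      (if O.dir p.1 p.2 then φ p.1 else -φ p.1) = 0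

/-- `G` admits a nowhere-zero `A`-flow. -/
def HasNZFlow (G : SignedGraph V E) (A : Type) [AddCommGroup A] : Prop :=
  ∃ (O : G.Orientation) (φ : E → A), G.IsFlow O φ ∧ ∀ e : E, φ e ≠ 0

/-- `G` is flow-admissible: it admits a nowhere-zero integer flow. -/
def FlowAdmissible (G : SignedGraph V E) : Prop :=
  ∃ (O : G.Orientation) (φ : E → ℤ), G.IsFlow O φ ∧ ∀ e : E, φ e ≠ 0

/-- `G` admits a nowhere-zero `k`-flow: an integer flow with all values in
`{±1, …, ±(k-1)}`. -/
def HasNZkFlow (G : SignedGraph V E) (k : ℕ) : Prop :=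
  ∃ (O : G.Orientation) (φ : E → ℤ), G.IsFlow O φ ∧
    ∀ e : E, φ e ≠ 0 ∧ |φ e| < (k : ℤ)

/-- `G` is triply odd: it can be decomposed into three edge-disjoint eulerian
subgraphs, each with an odd number of negative edges, sharing a common
vertex. -/
def TriplyOdd (G : SignedGraph V E) : Prop :=
  ∃ S₁ S₂ S₃ : Finset E,
    Disjoint S₁ S₂ ∧ Disjoint S₁ S₃ ∧ Disjoint S₂ S₃ ∧
    S₁ ∪ S₂ ∪ S₃ = univ ∧
    G.EulerianOn S₁ ∧ G.EulerianOn S₂ ∧ G.EulerianOn S₃ ∧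
    Odd (G.negEdges S₁).card ∧ Odd (G.negEdges S₂).card ∧
    Odd (G.negEdges S₃).card ∧
    ∃ v : V, v ∈ G.suppV S₁ ∧ v ∈ G.suppV S₂ ∧ v ∈ G.suppV S₃

/-- The edge set `P` spans a (nontrivial) path from `u` to `v`: a connected
subgraph in which `u` and `v` have valency `1` and all other vertices have
valency `2`. -/
def IsPathOn (G : SignedGraph V E) (P : Finset E) (u v : V) : Prop :=
  u ≠ v ∧ G.ConnOn P ∧ u ∈ G.suppV P ∧ v ∈ G.suppV P ∧
  G.valencyOn P u = 1 ∧ G.valencyOn P v = 1 ∧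
  ∀ w ∈ G.suppV P, w ≠ u → w ≠ v → G.valencyOn P w = 2

/-- `T` spans a signed circuit of type (2): the union of two unbalanced
circuits meeting at a single vertex. -/
def IsType2 (G : SignedGraph V E) (T : Finset E) : Prop :=
  ∃ (S₁ S₂ : Finset E) (v : V),
    G.IsUnbalancedCircuit S₁ ∧ G.IsUnbalancedCircuit S₂ ∧ Disjoint S₁ S₂ ∧
    G.suppV S₁ ∩ G.suppV S₂ = {v} ∧ S₁ ∪ S₂ = T

/-- `T` spans a signed circuit of type (3): the union of two vertex-disjoint
unbalanced circuits together with a path meeting the circuits only at its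
ends. -/
def IsType3 (G : SignedGraph V E) (T : Finset E) : Prop :=
  ∃ (S₁ S₂ P : Finset E) (u v : V),
    G.IsUnbalancedCircuit S₁ ∧ G.IsUnbalancedCircuit S₂ ∧
    Disjoint (G.suppV S₁) (G.suppV S₂) ∧
    G.IsPathOn P u v ∧ u ∈ G.suppV S₁ ∧ v ∈ G.suppV S₂ ∧
    G.suppV P ∩ G.suppV S₁ = {u} ∧ G.suppV P ∩ G.suppV S₂ = {v} ∧
    Disjoint P (S₁ ∪ S₂) ∧ S₁ ∪ S₂ ∪ P = T

/-- `T` spans a signed circuit: a balanced circuit, or a signed circuit of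
type (2) or (3). -/
def IsSignedCircuit (G : SignedGraph V E) (T : Finset E) : Prop :=
  G.IsBalancedCircuit T ∨ G.IsType2 T ∨ G.IsType3 T

/-- `T` spans a weak unbalanced bicircuit: two edge-disjoint unbalanced
circuits (not necessarily vertex-disjoint) joined by a possibly trivial path
having no edge in the two circuits. -/
def IsWeakBicircuit (G : SignedGraph V E) (T : Finset E) : Prop :=
  ∃ C₁ C₂ : Finset E,
    G.IsUnbalancedCircuit C₁ ∧ G.IsUnbalancedCircuit C₂ ∧ Disjoint C₁ C₂ ∧
    (((∃ v : V, v ∈ G.suppV C₁ ∧ v ∈ G.suppV C₂) ∧ T = C₁ ∪ C₂) ∨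
      ∃ (P : Finset E) (u v : V),
        G.IsPathOn P u v ∧ u ∈ G.suppV C₁ ∧ v ∈ G.suppV C₂ ∧
        Disjoint P (C₁ ∪ C₂) ∧ T = C₁ ∪ C₂ ∪ P)

/-- Every connected component of `G - f` contains an unbalanced circuit,
i.e. `G - f` has no balanced component. -/
def NoBalancedComponentAvoiding (G : SignedGraph V E) (f : E) : Prop :=
  ∀ u : V, ∃ S : Finset E,
    G.IsCircuit S ∧ G.signOf S = -1 ∧ f ∉ S ∧
    ∀ w ∈ G.suppV S, Relation.ReflTransGen (G.AdjOn (univ.erase f)) w u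

/-- `G` is 2-edge-connected: connected, and still connected after removing
any single edge. -/
def TwoEdgeConnected (G : SignedGraph V E) : Prop :=
  G.Connected ∧ ∀ f : E, ∀ u v : V,
    Relation.ReflTransGen (G.AdjOn (univ.erase f)) u v

/-- `G` is antibalanced: replacing its signature `σ` by `-σ` makes it
balanced. -/
def Antibalanced (G : SignedGraph V E) : Prop :=
  ∀ S : Finset E, G.IsCircuit S → (∏ e ∈ S, (-G.sign e)) = 1

end SignedGraph

namespace SignedGraph
set_option linter.unusedSectionVars false
set_option linter.unnecessarySeqFocus false
set_option linter.unusedVariables false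

variable {V E : Type} [Fintype V] [Fintype E] [DecidableEq V] [DecidableEq E]

variable (G : SignedGraph V E)

def dstart (d : E × Bool) : V := G.ends d.1 d.2
def dfinish (d : E × Bool) : V := G.ends d.1 (!d.2)

def IsWalk : V → V → List (E × Bool) → Prop
  | u, v, [] => u = v
  | u, v, d :: L => G.dstart d = u ∧ IsWalk (G.dfinish d) v L

variable {G}

lemma isWalk_append {u v w : V} {L M : List (E × Bool)} (h1 : G.IsWalk u v L)
    (h2 : G.IsWalk v w M) : G.IsWalk u w (L ++ M) := by
  induction L generalizing u with
  | nil => cases h1; exact h2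
  | cons d L ih => exact ⟨h1.1, ih h1.2⟩

lemma isWalk_split {u w : V} {L M : List (E × Bool)} (h : G.IsWalk u w (L ++ M)) :
    ∃ v, G.IsWalk u v L ∧ G.IsWalk v w M := by
  induction L generalizing u with
  | nil => exact ⟨u, rfl, h⟩
  | cons d L ih =>
    obtain ⟨v, h1, h2⟩ := ih h.2
    exact ⟨v, ⟨h.1, h1⟩, h2⟩

lemma valencyOn_union {S T : Finset E} (h : Disjoint S T) (w : V) :
    G.valencyOn (S ∪ T) w = G.valencyOn S w + G.valencyOn T w := by
  classical
  unfold valencyOn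
  rw [← Finset.card_union_of_disjoint]
  · congr 1
    ext p
    simp only [mem_filter, mem_union, mem_univ, true_and]
    tauto
  · rw [Finset.disjoint_left]
    intro p hp hp'
    simp only [mem_filter] at hp hp'
    exact (Finset.disjoint_left.mp h hp.2.1) hp'.2.1

lemma valencyOn_sdiff {S T : Finset E} (h : T ⊆ S) (w : V) :
    G.valencyOn S w = G.valencyOn T w + G.valencyOn (S \ T) w := by
  rw [← valencyOn_union (Finset.disjoint_sdiff) w, Finset.union_sdiff_of_subset h]

lemma valencyOn_singleton (e : E) (w : V) :
    G.valencyOn {e} w = (if G.ends e false = w then 1 else 0) +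
      (if G.ends e true = w then 1 else 0) := by
  classical
  unfold valencyOn
  rw [Finset.card_filter, Fintype.sum_prod_type]
  rw [Finset.sum_eq_single e]
  · simp only [Finset.mem_singleton, true_and]
    rw [Fintype.sum_bool]
    omega
  · intro a _ ha
    simp [Finset.mem_singleton, ha]
  · simp

lemma valencyOn_empty (w : V) : G.valencyOn (∅ : Finset E) w = 0 := by
  unfold valencyOn; simp

lemma valencyOn_insert {S : Finset E} {e : E} (he : e ∉ S) (w : V) :
    G.valencyOn (insert e S) w = (if G.ends e false = w then 1 else 0) +
      (if G.ends e true = w then 1 else 0) + G.valencyOn S w := by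
  rw [Finset.insert_eq, valencyOn_union (by simpa using he), valencyOn_singleton]

lemma valencyOn_pos {S : Finset E} {w : V} (h : 0 < G.valencyOn S w) :
    ∃ e ∈ S, ∃ i : Bool, G.ends e i = w := by
  obtain ⟨p, hp⟩ := Finset.card_pos.mp h
  simp only [mem_filter, mem_univ, true_and] at hp
  exact ⟨p.1, hp.1, p.2, hp.2⟩


lemma walk_valency_mod (L : List (E × Bool)) : ∀ u v x : V, G.IsWalk u v L →
    (L.map Prod.fst).Nodup →
    (G.valencyOn (L.map Prod.fst).toFinset x + (if u = x then 1 else 0) +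
      (if v = x then 1 else 0)) % 2 = 0 := by
  induction L with
  | nil =>
    intro u v x hw _
    cases hw
    rw [show ((List.nil (α := E × Bool)).map Prod.fst).toFinset = ∅ by simp, valencyOn_empty]
    split_ifs <;> omega
  | cons d L ih =>
    intro u v x hw hnd
    obtain ⟨hd, hw'⟩ := hw
    simp only [List.map_cons, List.toFinset_cons, List.nodup_cons] at hnd ⊢
    rw [valencyOn_insert (by simpa using hnd.1)]
    have hih := ih (G.dfinish d) v x hw' hnd.2
    obtain ⟨e, b⟩ := d
    subst hd
    simp only [dstart, dfinish] at *
    cases b <;> simp only [Bool.not_false, Bool.not_true] at * <;> split_ifs at * <;> simp_all <;> omega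

lemma exists_extension {S : Finset E} (hS : ∀ w, Even (G.valencyOn S w)) {L : List (E × Bool)}
    {u v : V} (hw : G.IsWalk u v L) (hnd : (L.map Prod.fst).Nodup)
    (hsub : (L.map Prod.fst).toFinset ⊆ S) (hne : u ≠ v) :
    ∃ d : E × Bool, d.1 ∈ S ∧ d.1 ∉ L.map Prod.fst ∧ G.dstart d = v := by
  have hpar := G.walk_valency_mod L u v v hw hnd
  rw [if_neg hne, if_pos rfl] at hpar
  have hsd := valencyOn_sdiff (G := G) hsub v
  obtain ⟨k, hk⟩ := hS v
  have hpos : 0 < G.valencyOn (S \ (L.map Prod.fst).toFinset) v := by omega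
  obtain ⟨e, he, i, hi⟩ := valencyOn_pos hpos
  rw [Finset.mem_sdiff] at he
  exact ⟨(e, i), he.1, by simpa [List.mem_toFinset] using he.2, hi⟩

lemma close_up {S : Finset E} (hS : ∀ w, Even (G.valencyOn S w)) :
    ∀ (n : ℕ) (L : List (E × Bool)) (u v : V),
    (S \ (L.map Prod.fst).toFinset).card ≤ n →
    G.IsWalk u v L → (L.map Prod.fst).Nodup → (L.map Prod.fst).toFinset ⊆ S →
    ∃ M : List (E × Bool), G.IsWalk u u M ∧ (M.map Prod.fst).Nodup ∧
      (M.map Prod.fst).toFinset ⊆ S ∧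
      (L.map Prod.fst).toFinset ⊆ (M.map Prod.fst).toFinset := by
  intro n
  induction n with
  | zero =>
    intro L u v hcard hw hnd hsub
    by_cases huv : u = v
    · exact ⟨L, by subst huv; exact hw, hnd, hsub, Finset.Subset.refl _⟩
    · obtain ⟨d, hdS, hdL, _⟩ := exists_extension hS hw hnd hsub huv
      exfalso
      have : d.1 ∈ S \ (L.map Prod.fst).toFinset := by
        rw [Finset.mem_sdiff, List.mem_toFinset]; exact ⟨hdS, hdL⟩
      have := Finset.card_pos.mpr ⟨d.1, this⟩
      omega
  | succ n ih =>
    intro L u v hcard hw hnd hsub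
    by_cases huv : u = v
    · exact ⟨L, by subst huv; exact hw, hnd, hsub, Finset.Subset.refl _⟩
    · obtain ⟨d, hdS, hdL, hds⟩ := exists_extension hS hw hnd hsub huv
      have hw' : G.IsWalk u (G.dfinish d) (L ++ [d]) :=
        isWalk_append hw ⟨hds, rfl⟩
      have hnd' : ((L ++ [d]).map Prod.fst).Nodup := by
        rw [List.map_append, List.nodup_append]
        exact ⟨hnd, List.nodup_singleton _, fun a ha b hb h => hdL (by
          simp only [List.map_cons, List.map_nil, List.mem_singleton] at hb
          rw [← hb, ← h]; exact ha)⟩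
      have hsub' : (((L ++ [d]).map Prod.fst)).toFinset ⊆ S := by
        rw [List.map_append, List.toFinset_append]
        simp only [Finset.union_subset_iff]
        exact ⟨hsub, by simpa using hdS⟩
      have hcard' : (S \ (((L ++ [d]).map Prod.fst)).toFinset).card ≤ n := by
        rw [List.map_append, List.toFinset_append]
        have h1 : S \ ((L.map Prod.fst).toFinset ∪ ([d].map Prod.fst).toFinset) =
            (S \ (L.map Prod.fst).toFinset).erase d.1 := by
          ext x
          simp only [List.map_cons, List.map_nil, List.toFinset_cons, List.toFinset_nil,
            Finset.mem_sdiff, Finset.mem_union, Finset.mem_erase, Finset.mem_insert,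
            Finset.notMem_empty, or_false]
          tauto
        rw [h1]
        have hmem : d.1 ∈ S \ (L.map Prod.fst).toFinset := by
          rw [Finset.mem_sdiff, List.mem_toFinset]; exact ⟨hdS, hdL⟩
        rw [Finset.card_erase_of_mem hmem]
        omega
      obtain ⟨M, hM1, hM2, hM3, hM4⟩ := ih (L ++ [d]) u (G.dfinish d) hcard' hw' hnd' hsub'
      refine ⟨M, hM1, hM2, hM3, Finset.Subset.trans ?_ hM4⟩
      rw [List.map_append, List.toFinset_append]
      exact Finset.subset_union_left


lemma mem_suppV_iff {S : Finset E} {u : V} :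
    u ∈ G.suppV S ↔ ∃ e ∈ S, ∃ i : Bool, G.ends e i = u := by
  unfold suppV; simp

lemma rotate_trail {L : List (E × Bool)} {a u : V} (hw : G.IsWalk a a L)
    (hu : u ∈ G.suppV (L.map Prod.fst).toFinset) :
    ∃ M : List (E × Bool), G.IsWalk u u M ∧ (M.map Prod.fst).Perm (L.map Prod.fst) := by
  rw [mem_suppV_iff] at hu
  obtain ⟨e, he, i, hi⟩ := hu
  rw [List.mem_toFinset, List.mem_map] at he
  obtain ⟨d, hdL, hde⟩ := he
  -- u = dstart d or dfinish d
  have hcase : G.dstart d = u ∨ G.dfinish d = u := by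
    unfold dstart dfinish
    rw [hde]
    rcases Bool.eq_or_eq_not i d.2 with h | h
    · left; rw [← h]; exact hi
    · right; rw [← hi, h]
  obtain ⟨T₁, T₂, rfl⟩ := List.append_of_mem hdL
  rcases hcase with hc | hc
  · obtain ⟨c, h1, h2⟩ := isWalk_split hw
    have hcu : c = u := by rw [← h2.1, hc]
    subst hcu
    refine ⟨(d :: T₂) ++ T₁, isWalk_append h2 h1, ?_⟩
    exact (List.perm_append_comm (l₁ := d :: T₂) (l₂ := T₁)).map _
  · have hre : T₁ ++ d :: T₂ = (T₁ ++ [d]) ++ T₂ := by simp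
    rw [hre] at hw
    obtain ⟨c, h1, h2⟩ := isWalk_split hw
    obtain ⟨c', h3, h4⟩ := isWalk_split h1
    have hcu : c = u := by
      obtain ⟨h5, h6⟩ := h4
      cases h6
      exact hc
    subst hcu
    refine ⟨T₂ ++ (T₁ ++ [d]), isWalk_append h2 h1, ?_⟩
    have hp : (T₂ ++ (T₁ ++ [d])).Perm (T₁ ++ d :: T₂) := by
      rw [hre]; exact List.perm_append_comm
    exact hp.map _

lemma exists_attach {S T : Finset E} (hTS : T ⊆ S) (hconn : G.ConnOn S)
    (hne : (S \ T).Nonempty) {v : V} (hv : v ∈ G.suppV S) :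
    ∃ d : E × Bool, d.1 ∈ S \ T ∧ (G.dstart d ∈ G.suppV T ∨ G.dstart d = v) := by
  classical
  obtain ⟨f, hf⟩ := hne
  rw [Finset.mem_sdiff] at hf
  set x := G.ends f false with hx
  have hxS : x ∈ G.suppV S := by
    rw [mem_suppV_iff]; exact ⟨f, hf.1, false, rfl⟩
  have hchain := hconn v hv x hxS
  -- Q y : ∃ dart from y into S \ T
  have key : ∀ y : V, Relation.ReflTransGen (G.AdjOn S) v y →
      (∃ d : E × Bool, d.1 ∈ S \ T ∧ G.dstart d = y) →
      ∃ d : E × Bool, d.1 ∈ S \ T ∧ (G.dstart d ∈ G.suppV T ∨ G.dstart d = v) := by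
    intro y hy
    induction hy with
    | refl => intro hQ; obtain ⟨d, hd1, hd2⟩ := hQ; exact ⟨d, hd1, Or.inr hd2⟩
    | tail hstep hadj ihh =>
      rename_i b c
      intro hQ
      obtain ⟨g, hgS, j, hgj, hgj'⟩ := hadj
      by_cases hgT : g ∈ T
      · obtain ⟨d, hd1, hd2⟩ := hQ
        refine ⟨d, hd1, Or.inl ?_⟩
        rw [hd2, mem_suppV_iff]
        exact ⟨g, hgT, !j, hgj'⟩
      · exact ihh ⟨(g, j), Finset.mem_sdiff.mpr ⟨hgS, hgT⟩, hgj⟩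
  exact key x hchain ⟨(f, false), Finset.mem_sdiff.mpr hf, rfl⟩

lemma euler_trail {S : Finset E} (hconn : G.ConnOn S) (hS : ∀ w, Even (G.valencyOn S w))
    {v : V} (hv : v ∈ G.suppV S) :
    ∃ L : List (E × Bool), G.IsWalk v v L ∧ (L.map Prod.fst).Nodup ∧
      (L.map Prod.fst).toFinset = S := by
  classical
  suffices h : ∀ n (L : List (E × Bool)), G.IsWalk v v L → (L.map Prod.fst).Nodup →
      (L.map Prod.fst).toFinset ⊆ S → (S \ (L.map Prod.fst).toFinset).card ≤ n →
      ∃ M : List (E × Bool), G.IsWalk v v M ∧ (M.map Prod.fst).Nodup ∧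
        (M.map Prod.fst).toFinset = S by
    refine h S.card [] rfl (by simp) (by simp) ?_
    simp
  intro n
  induction n with
  | zero =>
    intro L hw hnd hsub hcard
    refine ⟨L, hw, hnd, Finset.Subset.antisymm hsub ?_⟩
    rw [Nat.le_zero, Finset.card_eq_zero, Finset.sdiff_eq_empty_iff_subset] at hcard
    exact hcard
  | succ n ih =>
    intro L hw hnd hsub hcard
    by_cases hfull : (L.map Prod.fst).toFinset = S
    · exact ⟨L, hw, hnd, hfull⟩
    · have hne : (S \ (L.map Prod.fst).toFinset).Nonempty := by
        rw [Finset.sdiff_nonempty]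
        intro hcon
        exact hfull (Finset.Subset.antisymm hsub hcon)
      obtain ⟨d, hd, hcase⟩ := exists_attach hsub hconn hne hv
      rw [Finset.mem_sdiff, List.mem_toFinset] at hd
      -- get closed trail L' from u := dstart d with same edges as L
      have hrot : ∃ L' : List (E × Bool), G.IsWalk (G.dstart d) (G.dstart d) L' ∧
          ((L'.map Prod.fst)).Perm (L.map Prod.fst) := by
        rcases hcase with hc | hc
        · exact rotate_trail hw hc
        · exact ⟨L, by rw [hc]; exact hw, List.Perm.refl _⟩
      obtain ⟨L', hw0, hperm⟩ := hrot
      have hnd0 : (L'.map Prod.fst).Nodup := hperm.nodup_iff.mpr hnd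
      have hfin0 : (L'.map Prod.fst).toFinset = (L.map Prod.fst).toFinset :=
        List.toFinset_eq_of_perm _ _ hperm
      -- even valencies in remainder
      have heven' : ∀ w, Even (G.valencyOn (S \ (L.map Prod.fst).toFinset) w) := by
        intro w
        have h1 := G.walk_valency_mod L v v w hw hnd
        have h2 := valencyOn_sdiff (G := G) hsub w
        obtain ⟨k, hk⟩ := hS w
        rcases Nat.even_or_odd (G.valencyOn (S \ (L.map Prod.fst).toFinset) w) with h | h
        · exact h
        · exfalso; obtain ⟨m, hm⟩ := h; split_ifs at h1 <;> omega
      -- close up trail starting with dart d from dstart d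
      have hwd : G.IsWalk (G.dstart d) (G.dfinish d) [d] := ⟨rfl, rfl⟩
      have hdsub : ([d].map Prod.fst).toFinset ⊆ S \ (L.map Prod.fst).toFinset := by
        simp only [List.map_cons, List.map_nil, List.toFinset_cons, List.toFinset_nil]
        intro x hx
        simp only [Finset.mem_insert, Finset.notMem_empty, or_false] at hx
        subst hx
        exact Finset.mem_sdiff.mpr ⟨hd.1, by rw [List.mem_toFinset]; exact hd.2⟩
      obtain ⟨M, hM1, hM2, hM3, hM4⟩ := close_up heven' (S \ (L.map Prod.fst).toFinset).card
        [d] (G.dstart d) (G.dfinish d) (Finset.card_le_card (Finset.sdiff_subset))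
        hwd (by simp) hdsub
      -- combine
      have hdisj : ∀ x ∈ M.map Prod.fst, x ∉ L'.map Prod.fst := by
        intro x hxM hxL
        have := hM3 (List.mem_toFinset.mpr hxM)
        rw [Finset.mem_sdiff] at this
        exact this.2 (by rw [← hfin0]; exact List.mem_toFinset.mpr hxL)
      have hndC : ((M ++ L').map Prod.fst).Nodup := by
        rw [List.map_append, List.nodup_append]
        exact ⟨hM2, hnd0, fun a ha b hb h => hdisj a ha (by rw [h]; exact hb)⟩
      have hwC : G.IsWalk (G.dstart d) (G.dstart d) (M ++ L') := isWalk_append hM1 hw0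
      -- d.1 is among M's edges
      have hdM : d.1 ∈ (M.map Prod.fst).toFinset := hM4 (by simp)
      -- v is in supp of combined
      have hvC : v ∈ G.suppV ((M ++ L').map Prod.fst).toFinset := by
        rw [mem_suppV_iff]
        rcases hcase with hc | hc
        · cases L with
          | nil =>
            rw [mem_suppV_iff] at hc
            simp at hc
          | cons d₀ rest =>
            refine ⟨d₀.1, ?_, d₀.2, hw.1⟩
            rw [List.map_append, List.toFinset_append, Finset.mem_union]
            right
            rw [hfin0]
            simp
        · refine ⟨d.1, ?_, d.2, hc⟩
          rw [List.map_append, List.toFinset_append, Finset.mem_union]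
          exact Or.inl hdM
      obtain ⟨C, hwC', hpermC⟩ := rotate_trail hwC hvC
      have hndC' : (C.map Prod.fst).Nodup := hpermC.nodup_iff.mpr hndC
      have hfinC : (C.map Prod.fst).toFinset = ((M ++ L').map Prod.fst).toFinset :=
        List.toFinset_eq_of_perm _ _ hpermC
      have hLC : (L.map Prod.fst).toFinset ⊆ (C.map Prod.fst).toFinset := by
        rw [hfinC, List.map_append, List.toFinset_append, ← hfin0]
        exact Finset.subset_union_right
      have hsubC : (C.map Prod.fst).toFinset ⊆ S := by
        rw [hfinC, List.map_append, List.toFinset_append]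
        refine Finset.union_subset (Finset.Subset.trans hM3 Finset.sdiff_subset) ?_
        rw [hfin0]; exact hsub
      have hcardC : (S \ (C.map Prod.fst).toFinset).card ≤ n := by
        have hsub2 : S \ (C.map Prod.fst).toFinset ⊆ S \ (L.map Prod.fst).toFinset :=
          Finset.sdiff_subset_sdiff (Finset.Subset.refl S) hLC
        have hdC : d.1 ∈ (C.map Prod.fst).toFinset := by
          rw [hfinC, List.map_append, List.toFinset_append, Finset.mem_union]
          exact Or.inl hdM
        have hdin : d.1 ∈ S \ (L.map Prod.fst).toFinset := by
          rw [Finset.mem_sdiff, List.mem_toFinset]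
          exact hd
        have hdnot : d.1 ∉ S \ (C.map Prod.fst).toFinset := by
          rw [Finset.mem_sdiff]
          intro hcon
          exact hcon.2 hdC
        have hss : S \ (C.map Prod.fst).toFinset ⊂ S \ (L.map Prod.fst).toFinset :=
          (Finset.ssubset_iff_of_subset hsub2).mpr ⟨d.1, hdin, hdnot⟩
        have := Finset.card_lt_card hss
        omega
      exact ih C hwC' hndC' hsubC hcardC


variable (G)

/-- The half-edge labeling induced by traversing a trail with initial state `s`,
flipping the running state at each negative edge.  The half-edge by which an
edge is entered gets the current state; the other half-edge gets the negative
of the new state. -/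
def tf : ℤ → List (E × Bool) → E × Bool → ℤ
  | _, [], _ => 0
  | s, d :: L, p =>
    if p.1 = d.1 then (if p.2 = d.2 then s else -(s * ((G.sign d.1 : ℤˣ) : ℤ)))
    else tf (s * ((G.sign d.1 : ℤˣ) : ℤ)) L p

variable {G}

lemma tf_zero (s : ℤ) (L : List (E × Bool)) (p : E × Bool) (hp : p.1 ∉ L.map Prod.fst) :
    G.tf s L p = 0 := by
  induction L generalizing s with
  | nil => rfl
  | cons d L ih =>
    simp only [List.map_cons, List.mem_cons, not_or] at hp
    rw [tf, if_neg hp.1]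
    exact ih _ hp.2

lemma sign_cases (e : E) : ((G.sign e : ℤˣ) : ℤ) = 1 ∨ ((G.sign e : ℤˣ) : ℤ) = -1 := by
  rcases Int.units_eq_one_or (G.sign e) with h | h <;> rw [h] <;> simp

lemma tf_values (s : ℤ) (L : List (E × Bool)) (p : E × Bool) (hs : s = 1 ∨ s = -1)
    (hp : p.1 ∈ L.map Prod.fst) : G.tf s L p = 1 ∨ G.tf s L p = -1 := by
  induction L generalizing s with
  | nil => simp at hp
  | cons d L ih =>
    rw [tf]
    by_cases h1 : p.1 = d.1
    · rw [if_pos h1]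
      rcases sign_cases (G := G) d.1 with h | h <;> rcases hs with h' | h' <;>
        rw [h, h'] <;> split_ifs <;> norm_num
    · rw [if_neg h1]
      simp only [List.map_cons, List.mem_cons, h1, false_or] at hp
      apply ih _ _ hp
      rcases sign_cases (G := G) d.1 with h | h <;> rcases hs with h' | h' <;>
        rw [h, h'] <;> norm_num

lemma tf_flip (s : ℤ) (L : List (E × Bool)) (e : E) (i : Bool) :
    G.tf s L (e, !i) = -((G.sign e : ℤˣ) : ℤ) * G.tf s L (e, i) := by
  induction L generalizing s with
  | nil => simp [tf]
  | cons d L ih =>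
    have hsq : ((G.sign e : ℤˣ) : ℤ) * ((G.sign e : ℤˣ) : ℤ) = 1 := by
      rcases sign_cases (G := G) e with h | h <;> rw [h] <;> norm_num
    by_cases h1 : e = d.1
    · subst h1
      rw [tf, tf, if_pos rfl, if_pos rfl]
      rcases Bool.eq_or_eq_not i d.2 with h | h
      · subst h
        rw [if_neg (by simp), if_pos rfl]
        ring
      · subst h
        rw [if_pos (by simp), if_neg (by simp)]
        have h5 : -((G.sign d.1 : ℤˣ) : ℤ) * -(s * ((G.sign d.1 : ℤˣ) : ℤ)) =
            s * (((G.sign d.1 : ℤˣ) : ℤ) * ((G.sign d.1 : ℤˣ) : ℤ)) := by ring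
        rw [h5, hsq, mul_one]
    · rw [tf, tf, if_neg h1, if_neg h1]
      exact ih _

lemma tf_boundary (s : ℤ) (L : List (E × Bool)) (u v w : V) (hw : G.IsWalk u v L)
    (hnd : (L.map Prod.fst).Nodup) :
    ∑ p ∈ univ.filter (fun p : E × Bool => G.ends p.1 p.2 = w), G.tf s L p
      = (if u = w then s else 0) -
        (if v = w then s * (L.map (fun d => ((G.sign d.1 : ℤˣ) : ℤ))).prod else 0) := by
  induction L generalizing s u with
  | nil =>
    cases hw
    simp only [List.map_nil, List.prod_nil, mul_one]
    rw [Finset.sum_eq_zero (fun p _ => (rfl : G.tf s [] p = 0))]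
    split_ifs <;> ring
  | cons d L ih =>
    obtain ⟨hd, hw'⟩ := hw
    simp only [List.map_cons, List.nodup_cons] at hnd
    have hpt : ∀ p : E × Bool, G.tf s (d :: L) p =
        (if p.1 = d.1 then (if p.2 = d.2 then s else -(s * ((G.sign d.1 : ℤˣ) : ℤ))) else 0)
          + G.tf (s * ((G.sign d.1 : ℤˣ) : ℤ)) L p := by
      intro p
      by_cases h1 : p.1 = d.1
      · rw [tf, if_pos h1, if_pos h1, tf_zero _ _ _ (by rw [h1]; exact hnd.1), add_zero]
      · rw [tf, if_neg h1, if_neg h1, zero_add]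
    rw [Finset.sum_congr rfl (fun p _ => hpt p), Finset.sum_add_distrib]
    rw [ih _ _ hw' hnd.2]
    have hfirst : ∑ p ∈ univ.filter (fun p : E × Bool => G.ends p.1 p.2 = w),
        (if p.1 = d.1 then (if p.2 = d.2 then s else -(s * ((G.sign d.1 : ℤˣ) : ℤ))) else 0)
        = (if G.ends d.1 d.2 = w then s else 0)
          + (if G.ends d.1 (!d.2) = w then -(s * ((G.sign d.1 : ℤˣ) : ℤ)) else 0) := by
      rw [Finset.sum_filter, Fintype.sum_prod_type]
      rw [Finset.sum_eq_single d.1]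
      · rw [Fintype.sum_bool]
        obtain ⟨f, b⟩ := d
        cases b <;> simp <;> ring
      · intro a _ ha
        rw [Fintype.sum_bool]
        simp [ha]
      · simp
    rw [hfirst]
    have hds : G.ends d.1 d.2 = u := hd
    rw [← hds]
    rw [show G.dfinish d = G.ends d.1 (!d.2) from rfl]
    simp only [List.map_cons, List.prod_cons, dfinish]
    split_ifs <;> ring

lemma prod_signs_eq {S : Finset E} {G : SignedGraph V E} (hodd : Odd (G.negEdges S).card) :
    ∏ e ∈ S, ((G.sign e : ℤˣ) : ℤ) = -1 := by
  classical
  have hsplit := Finset.prod_filter_mul_prod_filter_not S (fun e => G.sign e = -1)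
      (fun e => ((G.sign e : ℤˣ) : ℤ))
  have h1 : ∏ e ∈ S.filter (fun e => G.sign e = -1), ((G.sign e : ℤˣ) : ℤ)
      = (-1 : ℤ) ^ (G.negEdges S).card := by
    rw [Finset.prod_congr rfl (fun e he => ?_), Finset.prod_const]
    · rfl
    · rw [Finset.mem_filter] at he
      rw [he.2]
      simp
  have h2 : ∏ e ∈ S.filter (fun e => ¬ G.sign e = -1), ((G.sign e : ℤˣ) : ℤ) = 1 := by
    apply Finset.prod_eq_one
    intro e he
    rw [Finset.mem_filter] at he
    rcases Int.units_eq_one_or (G.sign e) with h | h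
    · rw [h]; simp
    · exact absurd h he.2
  rw [← hsplit, h1, h2, mul_one, Odd.neg_one_pow hodd]

end SignedGraph

open SignedGraph Finset in
/-- Every triply odd signed eulerian graph `G` has flow number
`Φ(G) = 3`, i.e. `3` is the least `k` for which `G` has a nowhere-zero
`k`-flow. -/
theorem stmt16 {V E : Type} [Fintype V] [Fintype E] [DecidableEq V]
    [DecidableEq E] (G : SignedGraph V E) (hG : G.Eulerian)
    (htriply : G.TriplyOdd) :
    IsLeast {k : ℕ | G.HasNZkFlow k} 3 := by
  classical
  obtain ⟨S₁, S₂, S₃, h12, h13, h23, huniv, he1, he2, he3, ho1, ho2, ho3, v, hv1, hv2, hv3⟩ :=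
    htriply
  constructor
  · -- `G` has a nowhere-zero 3-flow
    obtain ⟨L₁, hw1, hnd1, hf1⟩ := euler_trail he1.2.1 he1.2.2 hv1
    obtain ⟨L₂, hw2, hnd2, hf2⟩ := euler_trail he2.2.1 he2.2.2 hv2
    obtain ⟨L₃, hw3, hnd3, hf3⟩ := euler_trail he3.2.1 he3.2.2 hv3
    set ψ : E × Bool → ℤ := fun p => G.tf 1 L₁ p + G.tf 1 L₂ p - 2 * G.tf 1 L₃ p with hψ
    have hmem : ∀ e : E, (e ∈ L₁.map Prod.fst ∧ e ∉ L₂.map Prod.fst ∧ e ∉ L₃.map Prod.fst) ∨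
        (e ∉ L₁.map Prod.fst ∧ e ∈ L₂.map Prod.fst ∧ e ∉ L₃.map Prod.fst) ∨
        (e ∉ L₁.map Prod.fst ∧ e ∉ L₂.map Prod.fst ∧ e ∈ L₃.map Prod.fst) := by
      intro e
      have h1 : (e ∈ L₁.map Prod.fst) ↔ e ∈ S₁ := by rw [← hf1, List.mem_toFinset]
      have h2 : (e ∈ L₂.map Prod.fst) ↔ e ∈ S₂ := by rw [← hf2, List.mem_toFinset]
      have h3 : (e ∈ L₃.map Prod.fst) ↔ e ∈ S₃ := by rw [← hf3, List.mem_toFinset]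
      have he' : e ∈ S₁ ∪ S₂ ∪ S₃ := by rw [huniv]; exact Finset.mem_univ e
      rw [Finset.mem_union, Finset.mem_union] at he'
      rw [Finset.disjoint_left] at h12 h13 h23
      rcases he' with (h | h) | h
      · exact Or.inl ⟨h1.mpr h, fun hc => h12 h (h2.mp hc), fun hc => h13 h (h3.mp hc)⟩
      · exact Or.inr (Or.inl ⟨fun hc => h12 (h1.mp hc) h, h2.mpr h,
          fun hc => h23 h (h3.mp hc)⟩)
      · exact Or.inr (Or.inr ⟨fun hc => h13 (h1.mp hc) h, fun hc => h23 (h2.mp hc) h,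
          h3.mpr h⟩)
    have hval : ∀ p : E × Bool, (ψ p = 1 ∨ ψ p = -1) ∨ (ψ p = 2 ∨ ψ p = -2) := by
      intro p
      rcases hmem p.1 with ⟨hA, hB, hC⟩ | ⟨hA, hB, hC⟩ | ⟨hA, hB, hC⟩
      · simp only [hψ]
        rw [tf_zero (G := G) _ _ _ hB, tf_zero (G := G) _ _ _ hC]
        rcases tf_values (G := G) 1 L₁ p (Or.inl rfl) hA with h | h <;> rw [h] <;> norm_num
      · simp only [hψ]
        rw [tf_zero (G := G) _ _ _ hA, tf_zero (G := G) _ _ _ hC]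
        rcases tf_values (G := G) 1 L₂ p (Or.inl rfl) hB with h | h <;> rw [h] <;> norm_num
      · simp only [hψ]
        rw [tf_zero (G := G) _ _ _ hA, tf_zero (G := G) _ _ _ hB]
        rcases tf_values (G := G) 1 L₃ p (Or.inl rfl) hC with h | h <;> rw [h] <;> norm_num
    have hne0 : ∀ p : E × Bool, ψ p ≠ 0 := by
      intro p
      rcases hval p with (h | h) | (h | h) <;> rw [h] <;> norm_num
    have hflip : ∀ (e : E) (i : Bool), ψ (e, !i) = -((G.sign e : ℤˣ) : ℤ) * ψ (e, i) := by
      intro e i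
      simp only [hψ]
      rw [tf_flip (G := G), tf_flip (G := G), tf_flip (G := G)]
      ring
    have hrel : ∀ e : E, G.sign e = 1 ↔ ψ (e, false) ≠ ψ (e, true) := by
      intro e
      have hf := hflip e true
      simp only [Bool.not_true] at hf
      constructor
      · intro h
        rw [h] at hf
        simp only [Units.val_one, neg_mul, one_mul] at hf
        rw [hf]
        intro hcon
        have := hne0 (e, true)
        omega
      · intro h
        rcases Int.units_eq_one_or (G.sign e) with h' | h'
        · exact h'
        · exfalso
          rw [h'] at hf
          simp at hf
          exact h hf
    have hprod : ∀ (L : List (E × Bool)) (S : Finset E), (L.map Prod.fst).Nodup →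
        (L.map Prod.fst).toFinset = S → Odd (G.negEdges S).card →
        (L.map (fun d => ((G.sign d.1 : ℤˣ) : ℤ))).prod = -1 := by
      intro L S hnd hf ho
      have h2 : (L.map (fun d : E × Bool => ((G.sign d.1 : ℤˣ) : ℤ))).prod
          = ∏ e ∈ S, ((G.sign e : ℤˣ) : ℤ) := by
        rw [← hf, List.prod_toFinset _ hnd, List.map_map]
        rfl
      rw [h2]
      exact prod_signs_eq ho
    refine ⟨⟨fun e i => if i then true else decide (ψ (e, false) = ψ (e, true)), ?_⟩,
      fun e => ψ (e, true), ?_, ?_⟩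
    · intro e
      rw [hrel e]
      simp
    · intro w
      have hs : ∑ p ∈ univ.filter (fun p : E × Bool => G.ends p.1 p.2 = w), ψ p = 0 := by
        rw [hψ]
        simp only
        rw [Finset.sum_sub_distrib, Finset.sum_add_distrib, ← Finset.mul_sum]
        rw [tf_boundary 1 L₁ v v w hw1 hnd1, tf_boundary 1 L₂ v v w hw2 hnd2,
          tf_boundary 1 L₃ v v w hw3 hnd3,
          hprod L₁ S₁ hnd1 hf1 ho1, hprod L₂ S₂ hnd2 hf2 ho2, hprod L₃ S₃ hnd3 hf3 ho3]
        split_ifs <;> ring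
      rw [← hs]
      apply Finset.sum_congr rfl
      rintro ⟨e, i⟩ hp
      cases i
      · simp only [Bool.false_eq_true, if_false, decide_eq_true_eq]
        by_cases h : ψ (e, false) = ψ (e, true)
        · rw [if_pos h]
          exact h.symm
        · rw [if_neg h]
          have hf := hflip e true
          simp only [Bool.not_true] at hf
          rcases Int.units_eq_one_or (G.sign e) with h' | h'
          · rw [h'] at hf
            simp only [Units.val_one, neg_mul, one_mul] at hf
            rw [hf]
          · rw [h'] at hf
            simp at hf
            exact absurd hf h
      · simp
    · intro e
      show ψ (e, true) ≠ 0 ∧ |ψ (e, true)| < ((3 : ℕ) : ℤ)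
      rcases hval (e, true) with (h | h) | (h | h) <;> rw [h] <;> norm_num
  · -- lower bound
    rintro k ⟨O, φ, hflow, hval⟩
    by_contra hk
    push_neg at hk
    obtain ⟨e₀, he₀⟩ := he1.1
    have hk2 : k = 2 := by
      have h := hval e₀
      have h1 : 1 ≤ |φ e₀| := Int.one_le_abs (by simpa using h.1)
      have h2 := h.2
      omega
    subst hk2
    have hpm : ∀ e, φ e = 1 ∨ φ e = -1 := by
      intro e
      have h := hval e
      have h2 := abs_lt.mp h.2
      have h1 := h.1
      push_cast at h2
      omega
    have htot : ∑ p : E × Bool, (if O.dir p.1 p.2 then φ p.1 else -φ p.1) = 0 := by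
      rw [← Finset.sum_fiberwise univ (fun p : E × Bool => G.ends p.1 p.2)
        (fun p => if O.dir p.1 p.2 then φ p.1 else -φ p.1)]
      exact Finset.sum_eq_zero (fun w _ => hflow w)
    rw [Fintype.sum_prod_type] at htot
    have hsum : ∀ e : E, ∑ b : Bool, (if O.dir e b then φ e else -φ e) =
        (if G.sign e = -1 then (if O.dir e true then 2 * φ e else -(2 * φ e)) else 0) := by
      intro e
      rw [Fintype.sum_bool]
      have hcompat := O.compat e
      rcases Int.units_eq_one_or (G.sign e) with h | h
      · rw [if_neg (show ¬ (G.sign e = -1) by rw [h]; decide)]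
        have hd := hcompat.mp h
        cases h1 : O.dir e true <;> cases h2 : O.dir e false
        · rw [h1, h2] at hd; exact absurd rfl hd
        · simp
        · simp
        · rw [h1, h2] at hd; exact absurd rfl hd
      · rw [if_pos h]
        have hd : O.dir e false = O.dir e true := by
          by_contra hcon
          have := hcompat.mpr hcon
          rw [h] at this
          exact absurd this (by decide)
        rw [hd]
        cases h1 : O.dir e true
        · simp only [Bool.false_eq_true, if_false]
          ring
        · simp only [if_true]
          ring
    have htot2 : ∑ e : E, (if G.sign e = -1 then
        (if O.dir e true then 2 * φ e else -(2 * φ e)) else 0) = 0 :=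
      (Finset.sum_congr rfl (fun e _ => hsum e)).symm.trans htot
    rw [← Finset.sum_filter] at htot2
    -- cast to ZMod 4
    have h4 : ∑ e ∈ univ.filter (fun e => G.sign e = -1),
        (((if O.dir e true then 2 * φ e else -(2 * φ e)) : ℤ) : ZMod 4) = 0 := by
      rw [← Int.cast_sum, htot2]
      rfl
    have h4' : ∀ e ∈ univ.filter (fun e => G.sign e = -1),
        (((if O.dir e true then 2 * φ e else -(2 * φ e)) : ℤ) : ZMod 4) = 2 := by
      intro e _
      rcases hpm e with h | h <;> rw [h] <;> split_ifs <;> push_cast <;> decide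
    rw [Finset.sum_congr rfl h4', Finset.sum_const] at h4
    -- the number of negative edges is odd
    have hsplit : univ.filter (fun e => G.sign e = -1) =
        G.negEdges S₁ ∪ G.negEdges S₂ ∪ G.negEdges S₃ := by
      conv_lhs => rw [← huniv]
      rw [Finset.filter_union, Finset.filter_union]
      rfl
    have hd12 : Disjoint (G.negEdges S₁) (G.negEdges S₂) :=
      Finset.disjoint_filter_filter h12
    have hd13 : Disjoint (G.negEdges S₁) (G.negEdges S₃) :=
      Finset.disjoint_filter_filter h13
    have hd23 : Disjoint (G.negEdges S₂) (G.negEdges S₃) :=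
      Finset.disjoint_filter_filter h23
    have hcard : (univ.filter (fun e => G.sign e = -1)).card =
        (G.negEdges S₁).card + (G.negEdges S₂).card + (G.negEdges S₃).card := by
      rw [hsplit, Finset.card_union_of_disjoint
        (Finset.disjoint_union_left.mpr ⟨hd13, hd23⟩),
        Finset.card_union_of_disjoint hd12]
    have hodd : Odd (univ.filter (fun e => G.sign e = -1)).card := by
      rw [hcard]
      obtain ⟨a, ha⟩ := ho1
      obtain ⟨b, hb⟩ := ho2
      obtain ⟨c, hc⟩ := ho3
      exact ⟨a + b + c + 1, by omega⟩
    obtain ⟨m, hm⟩ := hodd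
    rw [hm] at h4
    have hcon : (2 * m + 1) • (2 : ZMod 4) = 2 := by
      rw [nsmul_eq_mul]
      push_cast
      ring_nf
      rw [show ((4 : ZMod 4)) = 0 from by decide]
      ring
    rw [hcon] at h4
    exact absurd h4 (by decide)
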